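/- Let U be a unitary in the Clifford+T group 𝒥ₙᵀ and let P be a non-identity n-qubit Pauli matrix. Then sde_{√2}(R̂(P) · Û) − sde_{√2}(Û) ∈ {−1, 0, 1}, where R̂(P) and Û are the channel representations of R(P) and U. -/

import Mathlib

open Matrix Complex

/-- Length-`n` vectors over `𝔽₂`, indexing computational basis states of `n` qubits. -/
abbrev QVec (n : ℕ) := Fin n → ZMod 2

/-- Integer (here: natural number) dot product of two 0/1 vectors. -/
def dotN {n : ℕ} (a b : QVec n) : ℕ := ∑ i, (a i).val * (b i).val

/-- The `n`-qubit Pauli matrix `P_{a,b}`. -/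
noncomputable def Pauli {n : ℕ} (a b : QVec n) : Matrix (QVec n) (QVec n) ℂ :=
  fun x y => if x = y + a then Complex.I ^ dotN a b * (-1 : ℂ) ^ dotN b y else 0

/-- A `2^n × 2^n` unitary is Clifford if it maps every Pauli matrix to a
Pauli matrix up to a sign `±1`, under conjugation. -/
def IsClifford {n : ℕ} (C : Matrix (QVec n) (QVec n) ℂ) : Prop :=
  C ∈ Matrix.unitaryGroup (QVec n) ℂ ∧
    ∀ a b : QVec n, ∃ a' b' : QVec n, ∃ ε : ℂ, (ε = 1 ∨ ε = -1) ∧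
      C * Pauli a b * Cᴴ = ε • Pauli a' b'

/-- The channel representation `Û` of a `2^n × 2^n` matrix `U`:
rows/columns indexed by Pauli matrices, `Û_{rs} = (1/2^n) Tr(P_r U P_s U†)`. -/
noncomputable def chan {n : ℕ} (U : Matrix (QVec n) (QVec n) ℂ) :
    Matrix (QVec n × QVec n) (QVec n × QVec n) ℂ :=
  fun r s => ((1 : ℂ) / 2 ^ n) * Matrix.trace (Pauli r.1 r.2 * U * Pauli s.1 s.2 * Uᴴ)

/-- The gate `T ⊗ I_{2^{n-1}}`, where `T = diag(1, e^{iπ/4})` acts on the first qubit. -/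
noncomputable def Tgate (n : ℕ) : Matrix (QVec n) (QVec n) ℂ :=
  Matrix.diagonal fun x =>
    if h : 0 < n then (if x ⟨0, h⟩ = 1 then Complex.exp (Complex.I * Real.pi / 4) else 1) else 1

/-- The Clifford+T group `𝒥ₙᵀ`: the subgroup of the unitary group generated by the
Clifford unitaries together with `T ⊗ I_{2^{n-1}}`. -/
noncomputable def CliffordTGroup (n : ℕ) : Subgroup (Matrix.unitaryGroup (QVec n) ℂ) :=
  Subgroup.closure
    {u | IsClifford (u : Matrix (QVec n) (QVec n) ℂ) ∨ (u : Matrix (QVec n) (QVec n) ℂ) = Tgate n}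

/-- `R(P) = ((1+e^{iπ/4})/2) I + ((1−e^{iπ/4})/2) P`. -/
noncomputable def Rgate {n : ℕ} (P : Matrix (QVec n) (QVec n) ℂ) : Matrix (QVec n) (QVec n) ℂ :=
  ((1 + Complex.exp (Complex.I * Real.pi / 4)) / 2) • (1 : Matrix (QVec n) (QVec n) ℂ) +
    ((1 - Complex.exp (Complex.I * Real.pi / 4)) / 2) • P

/-- The smallest `√2`-denominator exponent of `x ∈ ℤ[1/√2]`: the least `k ∈ ℕ`
with `√2^k · x ∈ ℤ[√2]` (and `0` by convention when no such `k` exists, in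
particular `sde_{√2}(0) = 0`). -/
noncomputable def sdeSqrt2 (x : ℂ) : ℕ :=
  sInf {k : ℕ | ∃ a b : ℤ,
    ((Real.sqrt 2 : ℝ) : ℂ) ^ k * x = (a : ℂ) + (b : ℂ) * ((Real.sqrt 2 : ℝ) : ℂ)}

/-- The `√2`-sde of a matrix: the maximum of the `√2`-sde over its entries. -/
noncomputable def sdeSqrt2Mat {ι : Type*} [Fintype ι] (M : Matrix ι ι ℂ) : ℕ :=
  Finset.univ.sup fun p : ι × ι => sdeSqrt2 (M p.1 p.2)
section Basic
variable {n : ℕ}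

lemma zmod2_cases : ∀ z : ZMod 2, z = 0 ∨ z = 1 := by decide

lemma qself (v : QVec n) : v + v = 0 := by
  funext i; have : ∀ z : ZMod 2, z + z = 0 := by decide
  exact this (v i)

lemma qcancel (x a : QVec n) : x + a + a = x := by
  rw [add_assoc, qself, add_zero]

lemma dotN_comm (a b : QVec n) : dotN a b = dotN b a := by
  unfold dotN; exact Finset.sum_congr rfl fun i _ => Nat.mul_comm _ _

lemma dotN_add_right_mod (b c z : QVec n) :
    dotN b (c + z) % 2 = (dotN b c + dotN b z) % 2 := by
  unfold dotN
  rw [← Finset.sum_add_distrib, Finset.sum_nat_mod]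
  conv_rhs => rw [Finset.sum_nat_mod]
  congr 1
  apply Finset.sum_congr rfl
  intro i _
  have h1 : ((c + z) i).val = ((c i).val + (z i).val) % 2 := by
    show ((c i + z i)).val = _
    rw [ZMod.val_add]
  rw [h1]
  conv_lhs => rw [Nat.mul_mod, Nat.mod_mod_of_dvd _ (dvd_refl 2), ← Nat.mul_mod]
  rw [Nat.mul_add]

lemma dotN_add_left_mod (b c z : QVec n) :
    dotN (c + z) b % 2 = (dotN c b + dotN z b) % 2 := by
  rw [dotN_comm, dotN_add_right_mod, dotN_comm b c, dotN_comm b z]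

lemma neg_one_pow_congr2 {m l : ℕ} (h : m % 2 = l % 2) : ((-1 : ℂ)) ^ m = (-1) ^ l := by
  conv_lhs => rw [← Nat.div_add_mod m 2]
  conv_rhs => rw [← Nat.div_add_mod l 2]
  rw [pow_add, pow_add, pow_mul, pow_mul]
  simp [h]

lemma I_pow_congr {m l : ℕ} (h : m % 4 = l % 4) : (Complex.I) ^ m = Complex.I ^ l := by
  conv_lhs => rw [← Nat.div_add_mod m 4]
  conv_rhs => rw [← Nat.div_add_mod l 4]
  rw [pow_add, pow_add, pow_mul, pow_mul, Complex.I_pow_four]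
  simp [h]

end Basic
section PauliLemmas
variable {n : ℕ}

lemma dotN_zero_left (v : QVec n) : dotN 0 v = 0 := by simp [dotN]

lemma dotN_zero_right (v : QVec n) : dotN v 0 = 0 := by simp [dotN]

lemma pauli_zero : (Pauli (0:QVec n) 0) = 1 := by
  funext x y
  simp [Pauli, dotN, Matrix.one_apply]

lemma neg_one_eq_I_sq : (-1 : ℂ) = Complex.I ^ 2 := by rw [Complex.I_sq]

lemma neg_one_pow_I (m : ℕ) : ((-1:ℂ)) ^ m = Complex.I ^ (2 * m) := by
  rw [pow_mul, Complex.I_sq]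

lemma pauli_mul (a b c d : QVec n) : ∃ k : ℕ,
    Pauli a b * Pauli c d = (Complex.I ^ k) • Pauli (a+c) (b+d) := by
  refine ⟨(dotN a b + dotN c d + 2 * dotN b c + 3 * dotN (a+c) (b+d)) % 4, ?_⟩
  funext x z
  rw [Matrix.mul_apply]
  have hsum : (∑ y, Pauli a b x y * Pauli c d y z)
      = Pauli a b x (z + c) * Pauli c d (z + c) z := by
    apply Finset.sum_eq_single
    · intro y _ hy
      have h0 : Pauli c d y z = 0 := by simp [Pauli, hy]
      rw [h0, mul_zero]
    · intro h; exact absurd (Finset.mem_univ _) h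
  rw [hsum]
  simp only [Pauli, Matrix.smul_apply, smul_eq_mul, if_pos rfl, eq_self_iff_true, if_true]
  have hcond : (x = z + c + a) ↔ (x = z + (a + c)) := by
    rw [add_assoc, add_comm c a]
  by_cases hx : x = z + (a + c)
  · rw [if_pos (hcond.mpr hx), if_pos hx]
    have h1 : ((-1 : ℂ)) ^ dotN b (z + c) = (-1) ^ dotN b z * (-1) ^ dotN b c := by
      rw [← pow_add]
      exact neg_one_pow_congr2 (dotN_add_right_mod b z c)
    have h2 : ((-1 : ℂ)) ^ dotN (b + d) z = (-1) ^ dotN b z * (-1) ^ dotN d z := by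
      rw [← pow_add]
      exact neg_one_pow_congr2 (dotN_add_left_mod z b d)
    have h3 : Complex.I ^ ((dotN a b + dotN c d + 2 * dotN b c + 3 * dotN (a+c) (b+d)) % 4)
        * Complex.I ^ dotN (a+c) (b+d)
        = Complex.I ^ dotN a b * Complex.I ^ dotN c d * (-1:ℂ) ^ dotN b c := by
      rw [neg_one_pow_I, ← pow_add, ← pow_add, ← pow_add]
      apply I_pow_congr
      omega
    rw [h1, h2]
    linear_combination (-((-1:ℂ) ^ dotN b z * (-1:ℂ) ^ dotN d z)) * h3
  · rw [if_neg (fun h => hx (hcond.mp h)), if_neg hx, zero_mul, mul_zero]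

lemma charSum (v : QVec n) :
    (∑ x : QVec n, ((-1:ℂ)) ^ dotN v x) = if v = 0 then (2^n : ℂ) else 0 := by
  by_cases hv : v = 0
  · subst hv
    simp [dotN_zero_left, Finset.card_univ, Fintype.card_fun]
  · rw [if_neg hv]
    obtain ⟨i0, hi0⟩ : ∃ i, v i ≠ 0 := by
      by_contra h
      push_neg at h
      exact hv (funext fun i => h i)
    have hvi : v i0 = 1 := (zmod2_cases (v i0)).resolve_left hi0
    set e : QVec n := fun j => if j = i0 then 1 else 0 with he
    have hde : dotN v e = 1 := by
      unfold dotN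
      rw [Finset.sum_eq_single i0]
      · simp [he, hvi]; decide
      · intro j _ hj; simp [he, hj]
      · intro h; exact absurd (Finset.mem_univ _) h
    have hstep : ∀ x : QVec n, ((-1:ℂ)) ^ dotN v (x + e) = -((-1:ℂ)) ^ dotN v x := by
      intro x
      have : ((-1:ℂ)) ^ dotN v (x + e) = ((-1:ℂ)) ^ (dotN v x + 1) := by
        apply neg_one_pow_congr2
        rw [dotN_add_right_mod, hde]
      rw [this, pow_succ, mul_neg_one]
    have hS : (∑ x : QVec n, ((-1:ℂ)) ^ dotN v x)
        = ∑ x : QVec n, ((-1:ℂ)) ^ dotN v (x + e) := by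
      exact (Fintype.sum_equiv (Equiv.addRight e)
        (fun x => ((-1:ℂ)) ^ dotN v (x + e)) (fun x => ((-1:ℂ)) ^ dotN v x)
        (fun x => rfl)).symm
    have : (∑ x : QVec n, ((-1:ℂ)) ^ dotN v x)
        = -∑ x : QVec n, ((-1:ℂ)) ^ dotN v x := by
      conv_lhs => rw [hS]
      rw [← Finset.sum_neg_distrib]
      exact Finset.sum_congr rfl fun x _ => hstep x
    linear_combination (1/2 : ℂ) * this
section PauliLemmas2
variable {n : ℕ}

lemma pauli_sq (a b : QVec n) : Pauli a b * Pauli a b = 1 := by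
  funext x z
  rw [Matrix.mul_apply]
  have hsum : (∑ y, Pauli a b x y * Pauli a b y z)
      = Pauli a b x (z + a) * Pauli a b (z + a) z := by
    apply Finset.sum_eq_single
    · intro y _ hy
      have h0 : Pauli a b y z = 0 := by simp [Pauli, hy]
      rw [h0, mul_zero]
    · intro h; exact absurd (Finset.mem_univ _) h
  rw [hsum]
  simp only [Pauli, if_pos rfl, eq_self_iff_true, if_true]
  have hc : (x = z + a + a) ↔ x = z := by rw [qcancel]
  by_cases hx : x = z
  · rw [if_pos (hc.mpr hx), hx, Matrix.one_apply_eq]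
    have key : Complex.I ^ dotN a b * (-1:ℂ) ^ dotN b (z + a)
        * (Complex.I ^ dotN a b * (-1:ℂ) ^ dotN b z)
        = Complex.I ^ (2 * dotN a b + 2 * dotN b (z+a) + 2 * dotN b z) := by
      rw [neg_one_pow_I (dotN b (z+a)), neg_one_pow_I (dotN b z)]
      rw [show (2 * dotN a b + 2 * dotN b (z+a) + 2 * dotN b z)
          = (dotN a b + 2 * dotN b (z+a)) + (dotN a b + 2 * dotN b z) by ring]
      rw [pow_add, pow_add, pow_add]
    have h1 := dotN_add_right_mod b z a
    have h2 := dotN_comm a b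
    have h3 := dotN_comm b a
    have hI : Complex.I ^ (2 * dotN a b + 2 * dotN b (z+a) + 2 * dotN b z)
        = Complex.I ^ (0:ℕ) := I_pow_congr (by omega)
    rw [key, hI, pow_zero]
  · rw [if_neg (fun h => hx (hc.mp h)), Matrix.one_apply_ne hx, zero_mul]

lemma pauli_herm (a b : QVec n) : (Pauli a b)ᴴ = Pauli a b := by
  funext x y
  rw [Matrix.conjTranspose_apply]
  simp only [Pauli]
  have hiff : y = x + a ↔ x = y + a := by
    constructor <;> (intro h; rw [h, qcancel])
  by_cases h : x = y + a
  · rw [if_pos (hiff.mpr h), if_pos h]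
    have hs : (starRingEnd ℂ) (Complex.I ^ dotN a b * (-1:ℂ) ^ dotN b x)
        = ((-1:ℂ))^ dotN a b * Complex.I ^ dotN a b * (-1:ℂ) ^ dotN b x := by
      simp only [_root_.map_mul, _root_.map_pow, Complex.conj_I, map_neg, _root_.map_one]
      rw [show (-Complex.I) = (-1) * Complex.I from by ring, mul_pow]
    rw [show star (Complex.I ^ dotN a b * (-1:ℂ) ^ dotN b x)
        = (starRingEnd ℂ) (Complex.I ^ dotN a b * (-1:ℂ) ^ dotN b x) from rfl, hs]
    have hx : dotN b x = dotN b (y + a) := by rw [h]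
    rw [hx]
    rw [neg_one_pow_I (dotN a b), neg_one_pow_I (dotN b (y+a)), neg_one_pow_I (dotN b y),
      ← pow_add, ← pow_add, ← pow_add]
    apply I_pow_congr
    have h1 := dotN_add_right_mod b y a
    have h2 := dotN_comm a b
    have h3 := dotN_comm b a
    omega
  · rw [if_neg (fun hh => h (hiff.mp hh)), if_neg h, star_zero]

lemma trace_pauli (u v : QVec n) :
    Matrix.trace (Pauli u v) = if u = 0 ∧ v = 0 then (2^n : ℂ) else 0 := by
  by_cases hu : u = 0
  · subst hu
    have : Matrix.trace (Pauli (0:QVec n) v) = ∑ x : QVec n, ((-1:ℂ)) ^ dotN v x := by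
      unfold Matrix.trace
      apply Finset.sum_congr rfl
      intro x _
      simp [Matrix.diag, Pauli, dotN_zero_left]
    rw [this, charSum]
    by_cases hv : v = 0 <;> simp [hv]
  · have : Matrix.trace (Pauli u v) = 0 := by
      unfold Matrix.trace
      apply Finset.sum_eq_zero
      intro x _
      have : ¬ (x = x + u) := by
        intro h
        exact hu (by rwa [left_eq_add] at h)
      simp [Matrix.diag, Pauli, this]
    rw [this, if_neg (fun hh => hu hh.1)]

lemma trace_pauli_mul (a b c d : QVec n) :
    Matrix.trace (Pauli a b * Pauli c d) = if a = c ∧ b = d then (2^n : ℂ) else 0 := by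
  by_cases h : a = c ∧ b = d
  · obtain ⟨h1, h2⟩ := h
    subst h1; subst h2
    rw [pauli_sq, Matrix.trace_one, if_pos ⟨rfl, rfl⟩]
    simp [Fintype.card_fun]
  · obtain ⟨k, hk⟩ := pauli_mul a b c d
    rw [hk, Matrix.trace_smul, trace_pauli]
    have hno : ¬(a + c = 0 ∧ b + d = 0) := by
      rintro ⟨h1, h2⟩
      apply h
      constructor
      · have := congrArg (· + c) h1
        simpa [qcancel] using this
      · have := congrArg (· + d) h2
        simpa [qcancel] using this
    rw [if_neg hno, if_neg h, smul_zero]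

lemma pauli_complete (x y z w : QVec n) :
    (∑ t : QVec n × QVec n, Pauli t.1 t.2 x y * Pauli t.1 t.2 z w)
      = if x = w ∧ y = z then (2^n : ℂ) else 0 := by
  rw [Fintype.sum_prod_type]
  have hout : ∀ a : QVec n, a ≠ y + x → (∑ b : QVec n, Pauli a b x y * Pauli a b z w) = 0 := by
    intro a ha
    apply Finset.sum_eq_zero
    intro b _
    have : ¬ (x = y + a) := by
      intro h
      apply ha
      rw [h, ← add_assoc, qself, zero_add]
    simp [Pauli, this]
  rw [Finset.sum_eq_single (y + x) (fun a _ ha => hout a ha)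
    (fun h => absurd (Finset.mem_univ _) h)]
  have hxcond : x = y + (y + x) := by rw [← add_assoc, qself, zero_add]
  by_cases hz : z = w + (y + x)
  · have hterm : ∀ b : QVec n, Pauli (y+x) b x y * Pauli (y+x) b z w
        = ((-1:ℂ)) ^ dotN (x + w) b := by
      intro b
      simp only [Pauli, if_pos hxcond, if_pos hz]
      rw [neg_one_pow_I (dotN b y), neg_one_pow_I (dotN b w),
        neg_one_pow_I (dotN (x+w) b)]
      rw [show Complex.I ^ dotN (y+x) b * Complex.I ^ (2 * dotN b y)
          * (Complex.I ^ dotN (y+x) b * Complex.I ^ (2 * dotN b w))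
          = Complex.I ^ ((dotN (y+x) b + 2 * dotN b y) + (dotN (y+x) b + 2 * dotN b w)) from by
        rw [pow_add, pow_add, pow_add]]
      apply I_pow_congr
      have h1 := dotN_add_left_mod b y x
      have h2 := dotN_add_left_mod b x w
      have h3 := dotN_comm b y
      have h4 := dotN_comm b w
      have h5 := dotN_comm b x
      omega
    rw [Finset.sum_congr rfl (fun b _ => hterm b), charSum]
    by_cases hxw : x = w
    · have : x + w = 0 := by rw [hxw, qself]
      rw [if_pos this, if_pos]
      constructor
      · exact hxw
      · rw [hz, hxw, show w + (y + w) = y + (w + w) from by ring, qself, add_zero]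
    · have : ¬ (x + w = 0) := by
        intro h
        apply hxw
        have := congrArg (· + w) h
        simpa [qcancel] using this
      rw [if_neg this, if_neg (fun hh => hxw hh.1)]
  · have : (∑ b : QVec n, Pauli (y+x) b x y * Pauli (y+x) b z w) = 0 := by
      apply Finset.sum_eq_zero
      intro b _
      simp [Pauli, hz]
    rw [this]
    have : ¬ (x = w ∧ y = z) := by
      rintro ⟨h1, h2⟩
      apply hz
      rw [← h1, ← h2, show x + (y + x) = y + (x + x) from by ring, qself, add_zero]
    rw [if_neg this]

end PauliLemmas2
section Chan
variable {n : ℕ}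

lemma trace_mul_expand (A B : Matrix (QVec n) (QVec n) ℂ) :
    Matrix.trace (A * B) = ∑ p : QVec n × QVec n, A p.1 p.2 * B p.2 p.1 := by
  rw [Fintype.sum_prod_type]
  unfold Matrix.trace Matrix.diag
  exact Finset.sum_congr rfl fun x _ => Matrix.mul_apply

lemma sum_trace_pauli (A B : Matrix (QVec n) (QVec n) ℂ) :
    (∑ t : QVec n × QVec n,
      Matrix.trace (A * Pauli t.1 t.2) * Matrix.trace (Pauli t.1 t.2 * B))
    = (2^n : ℂ) * Matrix.trace (A * B) := by
  have step1 : (∑ t : QVec n × QVec n,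
      Matrix.trace (A * Pauli t.1 t.2) * Matrix.trace (Pauli t.1 t.2 * B))
      = ∑ t : QVec n × QVec n, ∑ p : QVec n × QVec n, ∑ q : QVec n × QVec n,
        (A p.1 p.2 * Pauli t.1 t.2 p.2 p.1) * (Pauli t.1 t.2 q.1 q.2 * B q.2 q.1) := by
    apply Finset.sum_congr rfl
    intro t _
    rw [trace_mul_expand, trace_mul_expand, Finset.sum_mul_sum]
  rw [step1, Finset.sum_comm]
  have step2 : ∀ p : QVec n × QVec n,
      (∑ t : QVec n × QVec n, ∑ q : QVec n × QVec n,
        (A p.1 p.2 * Pauli t.1 t.2 p.2 p.1) * (Pauli t.1 t.2 q.1 q.2 * B q.2 q.1))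
      = (A p.1 p.2 * B p.2 p.1) * (2^n : ℂ) := by
    intro p
    rw [Finset.sum_comm]
    have inner : ∀ q : QVec n × QVec n,
        (∑ t : QVec n × QVec n,
          (A p.1 p.2 * Pauli t.1 t.2 p.2 p.1) * (Pauli t.1 t.2 q.1 q.2 * B q.2 q.1))
        = (A p.1 p.2 * B q.2 q.1) *
            (if p.2 = q.2 ∧ p.1 = q.1 then (2^n : ℂ) else 0) := by
      intro q
      rw [← pauli_complete p.2 p.1 q.1 q.2, Finset.mul_sum]
      exact Finset.sum_congr rfl fun t _ => by ring
    rw [Finset.sum_congr rfl (fun q _ => inner q)]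
    have collapse : ∀ q : QVec n × QVec n,
        (A p.1 p.2 * B q.2 q.1) * (if p.2 = q.2 ∧ p.1 = q.1 then (2^n : ℂ) else 0)
        = if q = p then (A p.1 p.2 * B p.2 p.1) * (2^n : ℂ) else 0 := by
      intro q
      by_cases hq : q = p
      · subst hq; simp
      · have hc : ¬(p.2 = q.2 ∧ p.1 = q.1) := by
          rintro ⟨h1, h2⟩
          exact hq (Prod.ext h2.symm h1.symm)
        rw [if_neg hc, if_neg hq, mul_zero]
    rw [Finset.sum_congr rfl (fun q _ => collapse q), Finset.sum_ite_eq' Finset.univ p]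
    simp
  rw [Finset.sum_congr rfl (fun p _ => step2 p), trace_mul_expand, Finset.mul_sum]
  exact Finset.sum_congr rfl fun p _ => by ring

lemma chan_mul (U V : Matrix (QVec n) (QVec n) ℂ) : chan (U * V) = chan U * chan V := by
  funext r s
  rw [Matrix.mul_apply]
  unfold chan
  have per : ∀ t : QVec n × QVec n,
      ((1:ℂ)/2^n * Matrix.trace (Pauli r.1 r.2 * U * Pauli t.1 t.2 * Uᴴ)) *
        ((1:ℂ)/2^n * Matrix.trace (Pauli t.1 t.2 * V * Pauli s.1 s.2 * Vᴴ))
      = (1:ℂ)/2^n * ((1:ℂ)/2^n) *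
        (Matrix.trace ((Uᴴ * Pauli r.1 r.2 * U) * Pauli t.1 t.2) *
         Matrix.trace (Pauli t.1 t.2 * (V * Pauli s.1 s.2 * Vᴴ))) := by
    intro t
    have e1 : Matrix.trace (Pauli r.1 r.2 * U * Pauli t.1 t.2 * Uᴴ)
        = Matrix.trace ((Uᴴ * Pauli r.1 r.2 * U) * Pauli t.1 t.2) := by
      rw [Matrix.trace_mul_comm]
      rw [show Uᴴ * (Pauli r.1 r.2 * U * Pauli t.1 t.2)
          = (Uᴴ * Pauli r.1 r.2 * U) * Pauli t.1 t.2 from by simp only [Matrix.mul_assoc]]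
    have e2 : Matrix.trace (Pauli t.1 t.2 * V * Pauli s.1 s.2 * Vᴴ)
        = Matrix.trace (Pauli t.1 t.2 * (V * Pauli s.1 s.2 * Vᴴ)) := by
      rw [show Pauli t.1 t.2 * V * Pauli s.1 s.2 * Vᴴ
          = Pauli t.1 t.2 * (V * Pauli s.1 s.2 * Vᴴ) from by simp only [Matrix.mul_assoc]]
    rw [e1, e2]
    ring
  rw [Finset.sum_congr rfl (fun t _ => per t), ← Finset.mul_sum, sum_trace_pauli]
  have e3 : Matrix.trace ((Uᴴ * Pauli r.1 r.2 * U) * (V * Pauli s.1 s.2 * Vᴴ))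
      = Matrix.trace (Pauli r.1 r.2 * (U * V) * Pauli s.1 s.2 * (U * V)ᴴ) := by
    rw [Matrix.conjTranspose_mul]
    rw [show (Uᴴ * Pauli r.1 r.2 * U) * (V * Pauli s.1 s.2 * Vᴴ)
        = Uᴴ * (Pauli r.1 r.2 * U * (V * Pauli s.1 s.2 * Vᴴ)) from by
      simp only [Matrix.mul_assoc], Matrix.trace_mul_comm]
    rw [show Pauli r.1 r.2 * U * (V * Pauli s.1 s.2 * Vᴴ) * Uᴴ
        = Pauli r.1 r.2 * (U * V) * Pauli s.1 s.2 * (Vᴴ * Uᴴ) from by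
      simp only [Matrix.mul_assoc]]
  rw [e3]
  have h2n : (2:ℂ)^n ≠ 0 := pow_ne_zero n two_ne_zero
  field_simp

lemma chan_one : chan (1 : Matrix (QVec n) (QVec n) ℂ) = 1 := by
  funext r s
  unfold chan
  rw [Matrix.conjTranspose_one, Matrix.mul_one, Matrix.mul_one, trace_pauli_mul,
    Matrix.one_apply]
  by_cases h : r = s
  · subst h
    rw [if_pos ⟨rfl, rfl⟩, if_pos rfl]
    have h2n : (2:ℂ)^n ≠ 0 := pow_ne_zero n two_ne_zero
    field_simp
  · rw [if_neg (fun hh => h (Prod.ext hh.1 hh.2)), if_neg h, mul_zero]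

lemma chan_conjTranspose (U : Matrix (QVec n) (QVec n) ℂ) : chan (Uᴴ) = (chan U)ᵀ := by
  funext r s
  rw [Matrix.transpose_apply]
  unfold chan
  rw [Matrix.conjTranspose_conjTranspose]
  have h : Matrix.trace (Pauli r.1 r.2 * Uᴴ * Pauli s.1 s.2 * U)
      = Matrix.trace (Pauli s.1 s.2 * U * Pauli r.1 r.2 * Uᴴ) := by
    rw [show Pauli r.1 r.2 * Uᴴ * Pauli s.1 s.2 * U
        = (Pauli r.1 r.2 * Uᴴ) * (Pauli s.1 s.2 * U) from by simp only [Matrix.mul_assoc],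
      Matrix.trace_mul_comm]
    simp only [Matrix.mul_assoc]
  rw [h]

end Chan
section Ring2
noncomputable def SQ2 : ℂ := ((Real.sqrt 2 : ℝ) : ℂ)

lemma sq2_mul_self : SQ2 * SQ2 = 2 := by
  unfold SQ2
  rw [← Complex.ofReal_mul, Real.mul_self_sqrt (by norm_num)]
  norm_num

def Ering (x : ℂ) : Prop := ∃ a b : ℤ, x = (a : ℂ) + (b : ℂ) * SQ2

lemma Ering_zero : Ering 0 := ⟨0, 0, by simp⟩
lemma Ering_one : Ering 1 := ⟨1, 0, by simp⟩
lemma Ering_neg_one : Ering (-1) := ⟨-1, 0, by simp⟩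

lemma Ering_add {x y : ℂ} (hx : Ering x) (hy : Ering y) : Ering (x + y) := by
  obtain ⟨a, b, rfl⟩ := hx
  obtain ⟨c, d, rfl⟩ := hy
  exact ⟨a + c, b + d, by push_cast; ring⟩

lemma Ering_mul {x y : ℂ} (hx : Ering x) (hy : Ering y) : Ering (x * y) := by
  obtain ⟨a, b, rfl⟩ := hx
  obtain ⟨c, d, rfl⟩ := hy
  refine ⟨a * c + 2 * b * d, a * d + b * c, ?_⟩
  push_cast
  linear_combination ((b : ℂ) * (d : ℂ)) * sq2_mul_self

lemma Ering_sq2_mul {x : ℂ} (hx : Ering x) : Ering (SQ2 * x) := by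
  obtain ⟨a, b, rfl⟩ := hx
  refine ⟨2 * b, a, ?_⟩
  push_cast
  linear_combination (b : ℂ) * sq2_mul_self

lemma Ering_sum {ι : Type*} (s : Finset ι) (f : ι → ℂ) (h : ∀ i ∈ s, Ering (f i)) :
    Ering (∑ i ∈ s, f i) := by
  classical
  exact Finset.sum_induction f Ering (fun a b ha hb => Ering_add ha hb) Ering_zero h

def Dring (x : ℂ) : Prop := ∃ k : ℕ, Ering (SQ2 ^ k * x)

def Dhalf (x : ℂ) : Prop := Ering (SQ2 * x)

lemma Dring_of_Ering {x : ℂ} (h : Ering x) : Dring x := ⟨0, by simpa using h⟩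

lemma Dring_of_Dhalf {x : ℂ} (h : Dhalf x) : Dring x := ⟨1, by simpa [Dhalf] using h⟩

lemma sde_set_eq (x : ℂ) :
    sdeSqrt2 x = sInf {k : ℕ | Ering (SQ2 ^ k * x)} := rfl

lemma mem_succ {x : ℂ} {k : ℕ} (h : Ering (SQ2 ^ k * x)) : Ering (SQ2 ^ (k+1) * x) := by
  have : SQ2 ^ (k+1) * x = SQ2 * (SQ2 ^ k * x) := by rw [pow_succ]; ring
  rw [this]
  exact Ering_sq2_mul h

lemma mem_mono {x : ℂ} {k m : ℕ} (h : Ering (SQ2 ^ k * x)) (hkm : k ≤ m) :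
    Ering (SQ2 ^ m * x) := by
  induction m, hkm using Nat.le_induction with
  | base => exact h
  | succ m _ ih => exact mem_succ ih

lemma sde_le {x : ℂ} {k : ℕ} (h : Ering (SQ2 ^ k * x)) : sdeSqrt2 x ≤ k := by
  rw [sde_set_eq]
  exact Nat.sInf_le h

lemma ering_of_sde {x : ℂ} (hx : Dring x) {m : ℕ} (hm : sdeSqrt2 x ≤ m) :
    Ering (SQ2 ^ m * x) := by
  obtain ⟨k, hk⟩ := hx
  have hmem : sInf {k : ℕ | Ering (SQ2 ^ k * x)} ∈ {k : ℕ | Ering (SQ2 ^ k * x)} :=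
    Nat.sInf_mem ⟨k, hk⟩
  rw [sde_set_eq] at hm
  exact mem_mono hmem hm

lemma sdeMat_le {ι : Type*} [Fintype ι] (M : Matrix ι ι ℂ) (k : ℕ)
    (h : ∀ i j, Ering (SQ2 ^ k * M i j)) : sdeSqrt2Mat M ≤ k := by
  apply Finset.sup_le
  intro p _
  exact sde_le (h p.1 p.2)

lemma sde_entry_le {ι : Type*} [Fintype ι] (M : Matrix ι ι ℂ) (i j : ι) :
    sdeSqrt2 (M i j) ≤ sdeSqrt2Mat M :=
  Finset.le_sup (f := fun p : ι × ι => sdeSqrt2 (M p.1 p.2)) (Finset.mem_univ (i, j))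

lemma core_bound {ι : Type*} [Fintype ι] (A B : Matrix ι ι ℂ)
    (hA : ∀ i j, Dhalf (A i j)) (hB : ∀ i j, Dring (B i j)) (i j : ι) :
    Ering (SQ2 ^ (sdeSqrt2Mat B + 1) * (A * B) i j) := by
  rw [Matrix.mul_apply, Finset.mul_sum]
  apply Ering_sum
  intro t _
  have hsplit : SQ2 ^ (sdeSqrt2Mat B + 1) * (A i t * B t j)
      = (SQ2 * A i t) * (SQ2 ^ (sdeSqrt2Mat B) * B t j) := by
    rw [pow_succ]; ring
  rw [hsplit]
  exact Ering_mul (hA i t) (ering_of_sde (hB t j) (sde_entry_le B t j))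

lemma sdeMat_mul_le {ι : Type*} [Fintype ι] (A B : Matrix ι ι ℂ)
    (hA : ∀ i j, Dhalf (A i j)) (hB : ∀ i j, Dring (B i j)) :
    sdeSqrt2Mat (A * B) ≤ sdeSqrt2Mat B + 1 :=
  sdeMat_le _ _ fun i j => core_bound A B hA hB i j

lemma dring_mul_entries {ι : Type*} [Fintype ι] (A B : Matrix ι ι ℂ)
    (hA : ∀ i j, Dhalf (A i j)) (hB : ∀ i j, Dring (B i j)) :
    ∀ i j, Dring ((A * B) i j) :=
  fun i j => ⟨sdeSqrt2Mat B + 1, core_bound A B hA hB i j⟩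

end Ring2
section TGate
variable {n : ℕ}

lemma sq2_ne_zero : SQ2 ≠ 0 := by
  intro h
  have := sq2_mul_self
  rw [h, mul_zero] at this
  norm_num at this

lemma sq2_inv : SQ2⁻¹ = SQ2 / 2 := by
  rw [inv_eq_one_div, div_eq_div_iff sq2_ne_zero two_ne_zero]
  linear_combination -sq2_mul_self

lemma omega_val : Complex.exp (Complex.I * Real.pi / 4) = (SQ2 / 2) * (1 + Complex.I) := by
  have h : Complex.I * (Real.pi : ℂ) / 4 = ((Real.pi / 4 : ℝ) : ℂ) * Complex.I := by
    push_cast; ring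
  rw [h, Complex.exp_mul_I, ← Complex.ofReal_cos, ← Complex.ofReal_sin,
    Real.cos_pi_div_four, Real.sin_pi_div_four]
  unfold SQ2
  push_cast
  ring

lemma conj_omega : (starRingEnd ℂ) (Complex.exp (Complex.I * Real.pi / 4))
    = (SQ2 / 2) * (1 - Complex.I) := by
  rw [omega_val, _root_.map_mul, _root_.map_add, Complex.conj_I, _root_.map_one]
  rw [show (starRingEnd ℂ) (SQ2 / 2) = SQ2 / 2 from by
    unfold SQ2; rw [map_div₀, Complex.conj_ofReal, map_ofNat]]
  ring

/-- The first standard basis vector. -/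
def eVec (n : ℕ) (h : 0 < n) : QVec n := fun i => if i = ⟨0, h⟩ then 1 else 0

lemma dotN_eVec_right (h : 0 < n) (y : QVec n) : dotN y (eVec n h) = (y ⟨0, h⟩).val := by
  unfold dotN eVec
  rw [Finset.sum_eq_single ⟨0, h⟩]
  · rw [if_pos rfl, show ZMod.val (1 : ZMod 2) = 1 from rfl, mul_one]
  · intro j _ hj; simp [hj]
  · intro hh; exact absurd (Finset.mem_univ _) hh

lemma dotN_eVec_left (h : 0 < n) (y : QVec n) : dotN (eVec n h) y = (y ⟨0, h⟩).val := by
  rw [dotN_comm, dotN_eVec_right]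

lemma dotN_add_eVec_at (h : 0 < n) (c d : QVec n) (hc : c ⟨0, h⟩ = 1) :
    (d ⟨0, h⟩ = 0 → dotN c (d + eVec n h) = dotN c d + 1) ∧
    (d ⟨0, h⟩ = 1 → dotN c d = dotN c (d + eVec n h) + 1) := by
  have key : ∀ dd : QVec n, dotN c dd
      = (∑ i ∈ Finset.univ.erase ⟨0, h⟩, (c i).val * (dd i).val) + (dd ⟨0, h⟩).val := by
    intro dd
    unfold dotN
    rw [← Finset.sum_erase_add Finset.univ _ (Finset.mem_univ ⟨0, h⟩), hc,
      show ZMod.val (1 : ZMod 2) = 1 from rfl, one_mul]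
  have same : (∑ i ∈ Finset.univ.erase ⟨0, h⟩, (c i).val * ((d + eVec n h) i).val)
      = ∑ i ∈ Finset.univ.erase ⟨0, h⟩, (c i).val * (d i).val := by
    apply Finset.sum_congr rfl
    intro i hi
    have hne : i ≠ ⟨0, h⟩ := (Finset.mem_erase.mp hi).1
    have : (d + eVec n h) i = d i := by
      show d i + eVec n h i = d i
      unfold eVec
      rw [if_neg hne, add_zero]
    rw [this]
  constructor
  · intro hd0
    have h1 : ((d + eVec n h) ⟨0, h⟩) = 1 := by
      show d ⟨0, h⟩ + eVec n h ⟨0, h⟩ = 1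
      unfold eVec
      rw [if_pos rfl, hd0, zero_add]
    rw [key, key, same, hd0, h1, show ZMod.val (1 : ZMod 2) = 1 from rfl,
      show ZMod.val (0 : ZMod 2) = 0 from rfl]
  · intro hd1
    have h1 : ((d + eVec n h) ⟨0, h⟩) = 0 := by
      show d ⟨0, h⟩ + eVec n h ⟨0, h⟩ = 0
      unfold eVec
      rw [if_pos rfl, hd1]
      decide
    rw [key, key, same, hd1, h1, show ZMod.val (0 : ZMod 2) = 0 from rfl,
      show ZMod.val (1 : ZMod 2) = 1 from rfl]

lemma tgate_apply (h : 0 < n) (x : QVec n) :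
    (fun z : QVec n => if hh : 0 < n then
        (if z ⟨0, hh⟩ = 1 then Complex.exp (Complex.I * Real.pi / 4) else 1) else 1) x
    = (if x ⟨0, h⟩ = 1 then Complex.exp (Complex.I * Real.pi / 4) else 1) := by
  simp only [dif_pos h]

lemma neg_one_pow_dotN_add (h : 0 < n) (d y : QVec n) :
    ((-1:ℂ)) ^ dotN (d + eVec n h) y
      = (-1) ^ dotN d y * (-1) ^ ((y ⟨0, h⟩).val) := by
  rw [← pow_add]
  apply neg_one_pow_congr2
  rw [dotN_add_left_mod, dotN_eVec_left]
section TConj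
variable {n : ℕ}

lemma tgate_entry (f : QVec n → ℂ) (P : Matrix (QVec n) (QVec n) ℂ) (x y : QVec n) :
    (Matrix.diagonal f * P * Matrix.diagonal (star f)) x y = f x * P x y * star (f y) := by
  rw [Matrix.mul_diagonal, Matrix.diagonal_mul]
  rfl

lemma tgate_conj (h : 0 < n) (c d : QVec n) (hc : c ⟨0, h⟩ = 1) :
    Tgate n * Pauli c d * (Tgate n)ᴴ
      = SQ2⁻¹ • (Pauli c d + ((-1:ℂ) ^ (d ⟨0, h⟩).val) • Pauli c (d + eVec n h)) := by
  set f : QVec n → ℂ := fun z => if hh : 0 < n then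
      (if z ⟨0, hh⟩ = 1 then Complex.exp (Complex.I * Real.pi / 4) else 1) else 1 with hf
  have hfval : ∀ z : QVec n, f z
      = if z ⟨0, h⟩ = 1 then Complex.exp (Complex.I * Real.pi / 4) else 1 := by
    intro z; rw [hf]; exact dif_pos h
  have hTg : Tgate n = Matrix.diagonal f := rfl
  funext x y
  rw [hTg, Matrix.diagonal_conjTranspose, tgate_entry,
    Matrix.smul_apply, Matrix.add_apply, Matrix.smul_apply]
  simp only [smul_eq_mul]
  by_cases hxy : x = y + c
  · have hx0 : x ⟨0, h⟩ = y ⟨0, h⟩ + 1 := by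
      rw [hxy]; show y ⟨0, h⟩ + c ⟨0, h⟩ = _; rw [hc]
    simp only [Pauli, if_pos hxy]
    rw [hfval x, hfval y, neg_one_pow_dotN_add h d y, hx0]
    rcases zmod2_cases (y ⟨0, h⟩) with hy0 | hy0 <;> rw [hy0]
    · rw [show ((0:ZMod 2) + 1) = 1 from rfl, if_pos rfl,
        if_neg (show ¬(0:ZMod 2) = 1 by decide),
        show ZMod.val (0 : ZMod 2) = 0 from rfl, pow_zero, star_one]
      rcases zmod2_cases (d ⟨0, h⟩) with hd | hd <;> rw [hd]
      · have hrel := (dotN_add_eVec_at h c d hc).1 hd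
        rw [show ZMod.val (0 : ZMod 2) = 0 from rfl, pow_zero, hrel, pow_succ,
          omega_val, sq2_inv]
        ring
      · have hrel := (dotN_add_eVec_at h c d hc).2 hd
        rw [show ZMod.val (1 : ZMod 2) = 1 from rfl, pow_one, hrel, pow_succ,
          omega_val, sq2_inv]
        linear_combination (SQ2/2 * Complex.I ^ dotN c (d + eVec n h)
          * (-1:ℂ) ^ dotN d y) * Complex.I_mul_I
    · rw [show ((1:ZMod 2) + 1) = 0 from rfl,
        if_neg (show ¬(0:ZMod 2) = 1 by decide), if_pos rfl,
        show ZMod.val (1 : ZMod 2) = 1 from rfl, pow_one,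
        show star (Complex.exp (Complex.I * (Real.pi:ℂ) / 4))
          = (starRingEnd ℂ) (Complex.exp (Complex.I * (Real.pi:ℂ) / 4)) from rfl,
        conj_omega]
      rcases zmod2_cases (d ⟨0, h⟩) with hd | hd <;> rw [hd]
      · have hrel := (dotN_add_eVec_at h c d hc).1 hd
        rw [show ZMod.val (0 : ZMod 2) = 0 from rfl, pow_zero, hrel, pow_succ, sq2_inv]
        ring
      · have hrel := (dotN_add_eVec_at h c d hc).2 hd
        rw [show ZMod.val (1 : ZMod 2) = 1 from rfl, pow_one, hrel, pow_succ, sq2_inv]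
        linear_combination (-(SQ2/2) * Complex.I ^ dotN c (d + eVec n h)
          * (-1:ℂ) ^ dotN d y) * Complex.I_mul_I
  · have hP1 : Pauli c d x y = 0 := by simp [Pauli, hxy]
    have hP2 : Pauli c (d + eVec n h) x y = 0 := by simp [Pauli, hxy]
    simp [hP1, hP2]

lemma tgate_conj_comm (h : 0 < n) (c d : QVec n) (hc : c ⟨0, h⟩ = 0) :
    Tgate n * Pauli c d * (Tgate n)ᴴ = Pauli c d := by
  set f : QVec n → ℂ := fun z => if hh : 0 < n then
      (if z ⟨0, hh⟩ = 1 then Complex.exp (Complex.I * Real.pi / 4) else 1) else 1 with hf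
  have hfval : ∀ z : QVec n, f z
      = if z ⟨0, h⟩ = 1 then Complex.exp (Complex.I * Real.pi / 4) else 1 := by
    intro z; rw [hf]; exact dif_pos h
  have hTg : Tgate n = Matrix.diagonal f := rfl
  funext x y
  rw [hTg, Matrix.diagonal_conjTranspose, tgate_entry]
  by_cases hxy : x = y + c
  · have hx0 : x ⟨0, h⟩ = y ⟨0, h⟩ := by
      rw [hxy]; show y ⟨0, h⟩ + c ⟨0, h⟩ = _; rw [hc, add_zero]
    simp only [Pauli, if_pos hxy]
    rw [hfval x, hfval y, hx0]
    rcases zmod2_cases (y ⟨0, h⟩) with hy0 | hy0 <;> rw [hy0]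
    · rw [if_neg (show ¬(0:ZMod 2) = 1 by decide), star_one]
      ring
    · rw [if_pos rfl,
        show star (Complex.exp (Complex.I * (Real.pi:ℂ) / 4))
          = (starRingEnd ℂ) (Complex.exp (Complex.I * (Real.pi:ℂ) / 4)) from rfl,
        conj_omega, omega_val]
      linear_combination ((Complex.I ^ dotN c d * (-1:ℂ) ^ dotN d y)
          * (1 - Complex.I * Complex.I) / 4) * sq2_mul_self
        + (-(Complex.I ^ dotN c d * (-1:ℂ) ^ dotN d y) / 2) * Complex.I_mul_I
  · have hP1 : Pauli c d x y = 0 := by simp [Pauli, hxy]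
    rw [hP1]
    ring

lemma tgate_zero (hn : ¬ 0 < n) : Tgate n = 1 := by
  unfold Tgate
  rw [show (fun x : QVec n => if h : 0 < n then
      (if x ⟨0, h⟩ = 1 then Complex.exp (Complex.I * Real.pi / 4) else 1) else 1)
    = fun _ : QVec n => (1:ℂ) from funext fun x => dif_neg hn]
  exact Matrix.diagonal_one

end TConj
section Closure
variable {n : ℕ}

lemma Ering_neg_one_pow (m : ℕ) : Ering ((-1:ℂ) ^ m) := by
  rcases Nat.even_or_odd m with h | h
  · rw [h.neg_one_pow]; exact Ering_one
  · rw [h.neg_one_pow]; exact Ering_neg_one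

lemma Dring_zero : Dring 0 := Dring_of_Ering Ering_zero

lemma Dring_add {x y : ℂ} (hx : Dring x) (hy : Dring y) : Dring (x + y) := by
  obtain ⟨k, hk⟩ := hx
  obtain ⟨l, hl⟩ := hy
  refine ⟨max k l, ?_⟩
  rw [mul_add]
  exact Ering_add (mem_mono hk (le_max_left k l)) (mem_mono hl (le_max_right k l))

lemma Dring_mul {x y : ℂ} (hx : Dring x) (hy : Dring y) : Dring (x * y) := by
  obtain ⟨k, hk⟩ := hx
  obtain ⟨l, hl⟩ := hy
  refine ⟨k + l, ?_⟩
  rw [show SQ2 ^ (k + l) * (x * y) = (SQ2 ^ k * x) * (SQ2 ^ l * y) from by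
    rw [pow_add]; ring]
  exact Ering_mul hk hl

lemma Dring_sum {ι : Type*} (s : Finset ι) (f : ι → ℂ) (h : ∀ i ∈ s, Dring (f i)) :
    Dring (∑ i ∈ s, f i) :=
  Finset.sum_induction f Dring (fun _ _ ha hb => Dring_add ha hb) Dring_zero h

lemma chan_clifford_D (C : Matrix (QVec n) (QVec n) ℂ) (hC : IsClifford C)
    (r s : QVec n × QVec n) : Dring (chan C r s) := by
  obtain ⟨a', b', ε, hε, hcon⟩ := hC.2 s.1 s.2
  unfold chan
  rw [show Pauli r.1 r.2 * C * Pauli s.1 s.2 * Cᴴ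
      = Pauli r.1 r.2 * (C * Pauli s.1 s.2 * Cᴴ) from by simp only [Matrix.mul_assoc],
    hcon, Matrix.mul_smul, Matrix.trace_smul, trace_pauli_mul]
  apply Dring_of_Ering
  simp only [smul_eq_mul]
  have h2n : (2:ℂ)^n ≠ 0 := pow_ne_zero n two_ne_zero
  by_cases hrs : r.1 = a' ∧ r.2 = b'
  · rw [if_pos hrs]
    rw [show (1:ℂ)/2^n * (ε * 2^n) = ε from by field_simp]
    rcases hε with h | h <;> rw [h]
    · exact Ering_one
    · exact Ering_neg_one
  · rw [if_neg hrs, mul_zero, mul_zero]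
    exact Ering_zero

lemma chan_T_D (r s : QVec n × QVec n) : Dring (chan (Tgate n) r s) := by
  have h2n : (2:ℂ)^n ≠ 0 := pow_ne_zero n two_ne_zero
  by_cases hn : 0 < n
  · rcases zmod2_cases (s.1 ⟨0, hn⟩) with hc | hc
    · unfold chan
      rw [show Pauli r.1 r.2 * Tgate n * Pauli s.1 s.2 * (Tgate n)ᴴ
          = Pauli r.1 r.2 * (Tgate n * Pauli s.1 s.2 * (Tgate n)ᴴ) from by
        simp only [Matrix.mul_assoc], tgate_conj_comm hn s.1 s.2 hc, trace_pauli_mul]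
      apply Dring_of_Ering
      by_cases hrs : r.1 = s.1 ∧ r.2 = s.2
      · rw [if_pos hrs, show (1:ℂ)/2^n * 2^n = 1 from by field_simp]
        exact Ering_one
      · rw [if_neg hrs, mul_zero]
        exact Ering_zero
    · unfold chan
      rw [show Pauli r.1 r.2 * Tgate n * Pauli s.1 s.2 * (Tgate n)ᴴ
          = Pauli r.1 r.2 * (Tgate n * Pauli s.1 s.2 * (Tgate n)ᴴ) from by
        simp only [Matrix.mul_assoc], tgate_conj hn s.1 s.2 hc,
        Matrix.mul_smul, Matrix.trace_smul, Matrix.mul_add, Matrix.mul_smul,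
        Matrix.trace_add, Matrix.trace_smul, trace_pauli_mul, trace_pauli_mul]
      refine ⟨1, ?_⟩
      rw [pow_one]
      simp only [smul_eq_mul]
      set v : ℕ := (s.2 ⟨0, hn⟩).val with hv
      by_cases hA : r.1 = s.1 ∧ r.2 = s.2
      · rw [if_pos hA]
        by_cases hB : r.1 = s.1 ∧ r.2 = s.2 + eVec n hn
        · rw [if_pos hB]
          rw [show SQ2 * ((1:ℂ)/2^n * (SQ2⁻¹ * ((2^n:ℂ) + (-1:ℂ)^v * 2^n)))
              = 1 + (-1:ℂ)^v from by field_simp [sq2_ne_zero]]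
          exact Ering_add Ering_one (Ering_neg_one_pow v)
        · rw [if_neg hB, mul_zero, add_zero]
          rw [show SQ2 * ((1:ℂ)/2^n * (SQ2⁻¹ * (2^n:ℂ))) = 1 from by
            field_simp [sq2_ne_zero]]
          exact Ering_one
      · rw [if_neg hA]
        by_cases hB : r.1 = s.1 ∧ r.2 = s.2 + eVec n hn
        · rw [if_pos hB]
          rw [show SQ2 * ((1:ℂ)/2^n * (SQ2⁻¹ * ((0:ℂ) + (-1:ℂ)^v * 2^n)))
              = (-1:ℂ)^v from by field_simp [sq2_ne_zero]; ring]
          exact Ering_neg_one_pow v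
        · rw [if_neg hB, mul_zero, add_zero, mul_zero, mul_zero, mul_zero]
          exact Ering_zero
  · rw [tgate_zero hn, chan_one]
    apply Dring_of_Ering
    by_cases h : r = s
    · rw [h, Matrix.one_apply_eq]; exact Ering_one
    · rw [Matrix.one_apply_ne h]; exact Ering_zero

lemma chan_mem_D (u : Matrix.unitaryGroup (QVec n) ℂ) (hu : u ∈ CliffordTGroup n) :
    ∀ r s, Dring (chan (u : Matrix (QVec n) (QVec n) ℂ) r s) := by
  unfold CliffordTGroup at hu
  refine Subgroup.closure_induction (fun x hx => ?_) ?_ (fun x y _ _ ihx ihy => ?_)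
    (fun x _ ihx => ?_) hu
  · rcases hx with hcl | ht
    · exact fun r s => chan_clifford_D _ hcl r s
    · intro r s; rw [ht]; exact chan_T_D r s
  · intro r s
    rw [show ((1 : Matrix.unitaryGroup (QVec n) ℂ) : Matrix (QVec n) (QVec n) ℂ)
        = 1 from rfl, chan_one]
    apply Dring_of_Ering
    by_cases h : r = s
    · rw [h, Matrix.one_apply_eq]; exact Ering_one
    · rw [Matrix.one_apply_ne h]; exact Ering_zero
  · intro r s
    rw [show ((x * y : Matrix.unitaryGroup (QVec n) ℂ) : Matrix (QVec n) (QVec n) ℂ)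
        = (x : Matrix (QVec n) (QVec n) ℂ) * (y : Matrix (QVec n) (QVec n) ℂ) from rfl,
      chan_mul, Matrix.mul_apply]
    exact Dring_sum _ _ fun t _ => Dring_mul (ihx r t) (ihy t s)
  · intro r s
    rw [show ((x⁻¹ : Matrix.unitaryGroup (QVec n) ℂ) : Matrix (QVec n) (QVec n) ℂ)
        = (x : Matrix (QVec n) (QVec n) ℂ)ᴴ from by rw [← Unitary.star_eq_inv]; rfl,
      chan_conjTranspose, Matrix.transpose_apply]
    exact ihx s r

end Closure
section RGate
variable {n : ℕ}

lemma card_qvec : (Fintype.card (QVec n) : ℂ) = 2 ^ n := by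
  rw [show Fintype.card (QVec n) = 2 ^ n from by simp [Fintype.card_fun]]
  push_cast
  ring

lemma smul_one_eq_one {c : ℂ} (h : c • (1 : Matrix (QVec n) (QVec n) ℂ) = 1) : c = 1 := by
  have h2 := congrArg Matrix.trace h
  rw [Matrix.trace_smul, Matrix.trace_one, smul_eq_mul] at h2
  have hcard : (Fintype.card (QVec n) : ℂ) ≠ 0 := by
    rw [card_qvec]; exact pow_ne_zero n two_ne_zero
  calc c = c * Fintype.card (QVec n) / Fintype.card (QVec n) := by field_simp
  _ = Fintype.card (QVec n) / Fintype.card (QVec n) := by rw [h2]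
  _ = 1 := by field_simp

lemma I_pow_cases (k : ℕ) : Complex.I ^ k = 1 ∨ Complex.I ^ k = -1 ∨
    Complex.I ^ k = Complex.I ∨ Complex.I ^ k = -Complex.I := by
  have hm : Complex.I ^ k = Complex.I ^ (k % 4) :=
    I_pow_congr (Nat.mod_mod_of_dvd k (dvd_refl 4)).symm
  have h4 : k % 4 = 0 ∨ k % 4 = 1 ∨ k % 4 = 2 ∨ k % 4 = 3 := by omega
  rcases h4 with h | h | h | h <;> rw [hm, h]
  · left; rw [pow_zero]
  · right; right; left; rw [pow_one]
  · right; left; rw [Complex.I_sq]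
  · right; right; right
    rw [show (3:ℕ) = 2 + 1 from rfl, pow_add, Complex.I_sq, pow_one]
    ring

lemma omega_conj_facts :
    Complex.exp (Complex.I * Real.pi / 4) + (starRingEnd ℂ) (Complex.exp (Complex.I * Real.pi / 4)) = SQ2 ∧
    Complex.exp (Complex.I * Real.pi / 4) * (starRingEnd ℂ) (Complex.exp (Complex.I * Real.pi / 4)) = 1 := by
  constructor
  · rw [conj_omega, omega_val]; ring
  · rw [conj_omega, omega_val]
    linear_combination ((1 - Complex.I * Complex.I)/4) * sq2_mul_self
      + (- (1:ℂ)/2) * Complex.I_mul_I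

/-- The four-term expansion of the conjugation by `Rgate`. -/
lemma rgate_expand (a b : QVec n) (r s : QVec n × QVec n) :
    Pauli r.1 r.2 * Rgate (Pauli a b) * Pauli s.1 s.2 * (Rgate (Pauli a b))ᴴ
    = (((1 + Complex.exp (Complex.I * Real.pi / 4)) / 2) *
        (starRingEnd ℂ) ((1 + Complex.exp (Complex.I * Real.pi / 4)) / 2)) •
          (Pauli r.1 r.2 * Pauli s.1 s.2)
      + (((1 + Complex.exp (Complex.I * Real.pi / 4)) / 2) *
        (starRingEnd ℂ) ((1 - Complex.exp (Complex.I * Real.pi / 4)) / 2)) •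
          (Pauli r.1 r.2 * (Pauli s.1 s.2 * Pauli a b))
      + (((1 - Complex.exp (Complex.I * Real.pi / 4)) / 2) *
        (starRingEnd ℂ) ((1 + Complex.exp (Complex.I * Real.pi / 4)) / 2)) •
          (Pauli r.1 r.2 * (Pauli a b * Pauli s.1 s.2))
      + (((1 - Complex.exp (Complex.I * Real.pi / 4)) / 2) *
        (starRingEnd ℂ) ((1 - Complex.exp (Complex.I * Real.pi / 4)) / 2)) •
          (Pauli r.1 r.2 * (Pauli a b * (Pauli s.1 s.2 * Pauli a b))) := by
  have hRH : (Rgate (Pauli a b))ᴴ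
      = (starRingEnd ℂ) ((1 + Complex.exp (Complex.I * Real.pi / 4)) / 2) • (1 : Matrix (QVec n) (QVec n) ℂ)
        + (starRingEnd ℂ) ((1 - Complex.exp (Complex.I * Real.pi / 4)) / 2) • Pauli a b := by
    unfold Rgate
    rw [Matrix.conjTranspose_add, Matrix.conjTranspose_smul, Matrix.conjTranspose_smul,
      Matrix.conjTranspose_one, pauli_herm]
    rfl
  rw [hRH]
  unfold Rgate
  simp only [Matrix.mul_add, Matrix.add_mul, Matrix.mul_smul, Matrix.smul_mul,
    Matrix.mul_one, Matrix.one_mul, smul_smul, Matrix.mul_assoc]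
  module

end RGate
section RGate2
variable {n : ℕ}

lemma dhalf_intro {x : ℂ} (a b : ℤ) (h : SQ2 * x = (a:ℂ) + (b:ℂ) * SQ2) : Dhalf x := ⟨a, b, h⟩

lemma conj_half_add : (starRingEnd ℂ) ((1 + Complex.exp (Complex.I * Real.pi / 4))/2)
    = (1 + (starRingEnd ℂ) (Complex.exp (Complex.I * Real.pi / 4)))/2 := by
  rw [map_div₀, _root_.map_add, _root_.map_one, map_ofNat]

lemma conj_half_sub : (starRingEnd ℂ) ((1 - Complex.exp (Complex.I * Real.pi / 4))/2)
    = (1 - (starRingEnd ℂ) (Complex.exp (Complex.I * Real.pi / 4)))/2 := by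
  rw [map_div₀, map_sub, _root_.map_one, map_ofNat]

lemma chan_R_Dhalf (a b : QVec n) (hab : ¬(a = 0 ∧ b = 0)) (r s : QVec n × QVec n) :
    Dhalf (chan (Rgate (Pauli a b)) r s) := by
  have h2n : (2:ℂ)^n ≠ 0 := pow_ne_zero n two_ne_zero
  obtain ⟨k1, hk1⟩ := pauli_mul s.1 s.2 a b
  have hk1' : Pauli s.1 s.2 * Pauli a b
      = (Complex.I ^ k1) • Pauli (a + s.1) (b + s.2) := by
    rw [hk1, add_comm s.1 a, add_comm s.2 b]
  obtain ⟨k2, hk2⟩ := pauli_mul a b s.1 s.2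
  obtain ⟨k3, hk3⟩ := pauli_mul a b (a + s.1) (b + s.2)
  have e1 : a + (a + s.1) = s.1 := by rw [← add_assoc, qself, zero_add]
  have e2 : b + (b + s.2) = s.2 := by rw [← add_assoc, qself, zero_add]
  rw [e1, e2] at hk3
  have hT4 : Pauli a b * (Pauli s.1 s.2 * Pauli a b)
      = (Complex.I ^ k1 * Complex.I ^ k3) • Pauli s.1 s.2 := by
    rw [hk1', mul_smul_comm, hk3, smul_smul]
  have hmm : (Pauli a b * Pauli s.1 s.2) * (Pauli s.1 s.2 * Pauli a b) = 1 := by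
    rw [show (Pauli a b * Pauli s.1 s.2) * (Pauli s.1 s.2 * Pauli a b)
        = Pauli a b * ((Pauli s.1 s.2 * Pauli s.1 s.2) * Pauli a b) from by
          simp only [Matrix.mul_assoc], pauli_sq, Matrix.one_mul, pauli_sq]
  rw [hk2, hk1', smul_mul_assoc, mul_smul_comm, smul_smul, pauli_sq] at hmm
  have hone : Complex.I ^ k2 * Complex.I ^ k1 = 1 := smul_one_eq_one hmm
  have hXX : (Pauli a b * (Pauli s.1 s.2 * Pauli a b))
      * (Pauli a b * (Pauli s.1 s.2 * Pauli a b)) = 1 := by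
    rw [show (Pauli a b * (Pauli s.1 s.2 * Pauli a b))
          * (Pauli a b * (Pauli s.1 s.2 * Pauli a b))
        = Pauli a b * (Pauli s.1 s.2 * ((Pauli a b * Pauli a b)
            * (Pauli s.1 s.2 * Pauli a b))) from by
          simp only [Matrix.mul_assoc], pauli_sq, Matrix.one_mul]
    rw [show Pauli a b * (Pauli s.1 s.2 * (Pauli s.1 s.2 * Pauli a b))
        = Pauli a b * ((Pauli s.1 s.2 * Pauli s.1 s.2) * Pauli a b) from by
          simp only [Matrix.mul_assoc], pauli_sq, Matrix.one_mul, pauli_sq]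
  rw [hT4, smul_mul_assoc, mul_smul_comm, smul_smul, pauli_sq] at hXX
  have hmu : Complex.I ^ k1 * Complex.I ^ k3 = 1 ∨ Complex.I ^ k1 * Complex.I ^ k3 = -1 :=
    mul_self_eq_one_iff.mp (smul_one_eq_one hXX)
  unfold chan
  rw [rgate_expand a b r s, Matrix.trace_add, Matrix.trace_add, Matrix.trace_add,
    Matrix.trace_smul, Matrix.trace_smul, Matrix.trace_smul, Matrix.trace_smul,
    conj_half_add, conj_half_sub]
  have ht2 : Matrix.trace (Pauli r.1 r.2 * (Pauli s.1 s.2 * Pauli a b))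
      = Complex.I ^ k1 * (if r.1 = a + s.1 ∧ r.2 = b + s.2 then (2^n:ℂ) else 0) := by
    rw [hk1', mul_smul_comm, Matrix.trace_smul, trace_pauli_mul, smul_eq_mul]
  have ht3 : Matrix.trace (Pauli r.1 r.2 * (Pauli a b * Pauli s.1 s.2))
      = Complex.I ^ k2 * (if r.1 = a + s.1 ∧ r.2 = b + s.2 then (2^n:ℂ) else 0) := by
    rw [hk2, mul_smul_comm, Matrix.trace_smul, trace_pauli_mul, smul_eq_mul]
  have ht4 : Matrix.trace (Pauli r.1 r.2 * (Pauli a b * (Pauli s.1 s.2 * Pauli a b)))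
      = (Complex.I ^ k1 * Complex.I ^ k3)
          * (if r.1 = s.1 ∧ r.2 = s.2 then (2^n:ℂ) else 0) := by
    rw [hT4, mul_smul_comm, Matrix.trace_smul, trace_pauli_mul, smul_eq_mul]
  rw [trace_pauli_mul, ht2, ht3, ht4]
  simp only [smul_eq_mul]
  set w : ℂ := Complex.exp (Complex.I * Real.pi / 4) with hw
  have hprod : w * (starRingEnd ℂ) w = 1 := omega_conj_facts.2
  have hsum : w + (starRingEnd ℂ) w = SQ2 := omega_conj_facts.1
  have hdiff : w - (starRingEnd ℂ) w = SQ2 * Complex.I := by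
    rw [hw, conj_omega, omega_val]; ring
  by_cases h1 : r.1 = s.1 ∧ r.2 = s.2
  · by_cases h2 : r.1 = a + s.1 ∧ r.2 = b + s.2
    · exfalso
      apply hab
      constructor
      · exact right_eq_add.mp (h1.1.symm.trans h2.1)
      · exact right_eq_add.mp (h1.2.symm.trans h2.2)
    · rw [if_pos h1, if_neg h2]
      have hsimp : (1:ℂ)/2^n * ((1 + w)/2 * ((1 + (starRingEnd ℂ) w)/2) * 2^n
            + (1 + w)/2 * ((1 - (starRingEnd ℂ) w)/2) * (Complex.I ^ k1 * 0)
            + (1 - w)/2 * ((1 + (starRingEnd ℂ) w)/2) * (Complex.I ^ k2 * 0)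
            + (1 - w)/2 * ((1 - (starRingEnd ℂ) w)/2)
                * (Complex.I ^ k1 * Complex.I ^ k3 * 2^n))
          = (1 + w)/2 * ((1 + (starRingEnd ℂ) w)/2)
            + (1 - w)/2 * ((1 - (starRingEnd ℂ) w)/2)
                * (Complex.I ^ k1 * Complex.I ^ k3) := by
        field_simp
        ring
      rw [hsimp]
      rcases hmu with hmu | hmu <;> rw [hmu]
      · refine dhalf_intro 0 1 ?_
        push_cast
        linear_combination (SQ2/2) * hprod
      · refine dhalf_intro 1 0 ?_
        push_cast
        linear_combination (SQ2/2) * hsum + (1/2 : ℂ) * sq2_mul_self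
  · by_cases h2 : r.1 = a + s.1 ∧ r.2 = b + s.2
    · rw [if_neg h1, if_pos h2]
      have hsimp : (1:ℂ)/2^n * ((1 + w)/2 * ((1 + (starRingEnd ℂ) w)/2) * 0
            + (1 + w)/2 * ((1 - (starRingEnd ℂ) w)/2) * (Complex.I ^ k1 * 2^n)
            + (1 - w)/2 * ((1 + (starRingEnd ℂ) w)/2) * (Complex.I ^ k2 * 2^n)
            + (1 - w)/2 * ((1 - (starRingEnd ℂ) w)/2)
                * (Complex.I ^ k1 * Complex.I ^ k3 * 0))
          = (1 + w)/2 * ((1 - (starRingEnd ℂ) w)/2) * Complex.I ^ k1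
            + (1 - w)/2 * ((1 + (starRingEnd ℂ) w)/2) * Complex.I ^ k2 := by
        field_simp
        ring
      rw [hsimp]
      rcases I_pow_cases k2 with hz | hz | hz | hz
      · have hz1 : Complex.I ^ k1 = 1 := by
          have h' := hone; rw [hz] at h'; linear_combination h'
        rw [hz, hz1]
        refine dhalf_intro 0 0 ?_
        push_cast
        linear_combination (-(SQ2/2)) * hprod
      · have hz1 : Complex.I ^ k1 = -1 := by
          have h' := hone; rw [hz] at h'; linear_combination -h'
        rw [hz, hz1]
        refine dhalf_intro 0 0 ?_
        push_cast
        linear_combination (SQ2/2) * hprod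
      · have hz1 : Complex.I ^ k1 = -Complex.I := by
          have h' := hone; rw [hz] at h'
          linear_combination (-Complex.I) * h' + (Complex.I ^ k1) * Complex.I_mul_I
        rw [hz, hz1]
        refine dhalf_intro 1 0 ?_
        push_cast
        linear_combination (-(SQ2*Complex.I)/2) * hdiff
          + (-(Complex.I*Complex.I)/2) * sq2_mul_self + (-1 : ℂ) * Complex.I_mul_I
      · have hz1 : Complex.I ^ k1 = Complex.I := by
          have h' := hone; rw [hz] at h'
          linear_combination (Complex.I) * h' + (Complex.I ^ k1) * Complex.I_mul_I
        rw [hz, hz1]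
        refine dhalf_intro (-1) 0 ?_
        push_cast
        linear_combination ((SQ2*Complex.I)/2) * hdiff
          + ((Complex.I*Complex.I)/2) * sq2_mul_self + (1 : ℂ) * Complex.I_mul_I
    · rw [if_neg h1, if_neg h2]
      refine dhalf_intro 0 0 ?_
      push_cast
      ring

end RGate2
section Final
variable {n : ℕ}

lemma rgate_unitary (a b : QVec n) :
    Rgate (Pauli a b) * (Rgate (Pauli a b))ᴴ = 1 := by
  have hRH : (Rgate (Pauli a b))ᴴ
      = (starRingEnd ℂ) ((1 + Complex.exp (Complex.I * Real.pi / 4)) / 2)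
          • (1 : Matrix (QVec n) (QVec n) ℂ)
        + (starRingEnd ℂ) ((1 - Complex.exp (Complex.I * Real.pi / 4)) / 2)
          • Pauli a b := by
    unfold Rgate
    rw [Matrix.conjTranspose_add, Matrix.conjTranspose_smul, Matrix.conjTranspose_smul,
      Matrix.conjTranspose_one, pauli_herm]
    rfl
  rw [hRH]
  unfold Rgate
  have key : (((1 + Complex.exp (Complex.I * Real.pi / 4)) / 2)
        • (1 : Matrix (QVec n) (QVec n) ℂ)
      + ((1 - Complex.exp (Complex.I * Real.pi / 4)) / 2) • Pauli a b)
      * ((starRingEnd ℂ) ((1 + Complex.exp (Complex.I * Real.pi / 4)) / 2)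
          • (1 : Matrix (QVec n) (QVec n) ℂ)
        + (starRingEnd ℂ) ((1 - Complex.exp (Complex.I * Real.pi / 4)) / 2) • Pauli a b)
      = (((1 + Complex.exp (Complex.I * Real.pi / 4)) / 2)
            * (starRingEnd ℂ) ((1 + Complex.exp (Complex.I * Real.pi / 4)) / 2)
          + ((1 - Complex.exp (Complex.I * Real.pi / 4)) / 2)
            * (starRingEnd ℂ) ((1 - Complex.exp (Complex.I * Real.pi / 4)) / 2))
          • (1 : Matrix (QVec n) (QVec n) ℂ)
        + (((1 + Complex.exp (Complex.I * Real.pi / 4)) / 2)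
            * (starRingEnd ℂ) ((1 - Complex.exp (Complex.I * Real.pi / 4)) / 2)
          + ((1 - Complex.exp (Complex.I * Real.pi / 4)) / 2)
            * (starRingEnd ℂ) ((1 + Complex.exp (Complex.I * Real.pi / 4)) / 2))
          • Pauli a b := by
    simp only [Matrix.mul_add, Matrix.add_mul, smul_mul_assoc, mul_smul_comm, smul_smul,
      Matrix.mul_one, Matrix.one_mul, pauli_sq]
    module
  rw [key, conj_half_add, conj_half_sub]
  have hprod := omega_conj_facts.2
  rw [show (1 + Complex.exp (Complex.I * Real.pi / 4)) / 2
        * ((1 + (starRingEnd ℂ) (Complex.exp (Complex.I * Real.pi / 4))) / 2)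
      + (1 - Complex.exp (Complex.I * Real.pi / 4)) / 2
        * ((1 - (starRingEnd ℂ) (Complex.exp (Complex.I * Real.pi / 4))) / 2) = (1:ℂ) from by
    linear_combination (1/2 : ℂ) * hprod]
  rw [show (1 + Complex.exp (Complex.I * Real.pi / 4)) / 2
        * ((1 - (starRingEnd ℂ) (Complex.exp (Complex.I * Real.pi / 4))) / 2)
      + (1 - Complex.exp (Complex.I * Real.pi / 4)) / 2
        * ((1 + (starRingEnd ℂ) (Complex.exp (Complex.I * Real.pi / 4))) / 2) = (0:ℂ) from by
    linear_combination (-(1/2) : ℂ) * hprod]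
  simp

end Final


/-- For `U` in the Clifford+T group and a non-identity Pauli matrix `P`,
`sde_{√2}(R̂(P)·Û) − sde_{√2}(Û) ∈ {−1, 0, 1}`. -/
theorem sdeSqrt2_change (n : ℕ) (U : Matrix.unitaryGroup (QVec n) ℂ)
    (hU : U ∈ CliffordTGroup n) (a b : QVec n) (hP : Pauli a b ≠ 1) :
    (sdeSqrt2Mat (chan (Rgate (Pauli a b)) * chan (U : Matrix (QVec n) (QVec n) ℂ)) : ℤ) -
        (sdeSqrt2Mat (chan (U : Matrix (QVec n) (QVec n) ℂ)) : ℤ) ∈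
      ({-1, 0, 1} : Set ℤ) := by
  have hab : ¬(a = 0 ∧ b = 0) := by
    rintro ⟨ha, hb⟩
    apply hP
    rw [ha, hb, pauli_zero]
  have hMD : ∀ r s, Dring (chan (U : Matrix (QVec n) (QVec n) ℂ) r s) := chan_mem_D U hU
  have hRcD : ∀ r s, Dhalf (chan (Rgate (Pauli a b)) r s) := chan_R_Dhalf a b hab
  have hRH : ∀ r s, Dhalf ((chan ((Rgate (Pauli a b))ᴴ)) r s) := by
    intro r s
    rw [chan_conjTranspose, Matrix.transpose_apply]
    exact hRcD s r
  have h1 : sdeSqrt2Mat (chan (Rgate (Pauli a b)) * chan (U : Matrix (QVec n) (QVec n) ℂ))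
      ≤ sdeSqrt2Mat (chan (U : Matrix (QVec n) (QVec n) ℂ)) + 1 :=
    sdeMat_mul_le _ _ hRcD hMD
  have hinv : chan ((Rgate (Pauli a b))ᴴ)
      * (chan (Rgate (Pauli a b)) * chan (U : Matrix (QVec n) (QVec n) ℂ))
      = chan (U : Matrix (QVec n) (QVec n) ℂ) := by
    rw [← Matrix.mul_assoc, ← chan_mul,
      show (Rgate (Pauli a b))ᴴ * Rgate (Pauli a b) = 1 from
        mul_eq_one_comm.mp (rgate_unitary a b), chan_one, Matrix.one_mul]
  have h2 : sdeSqrt2Mat (chan (U : Matrix (QVec n) (QVec n) ℂ))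
      ≤ sdeSqrt2Mat (chan (Rgate (Pauli a b)) * chan (U : Matrix (QVec n) (QVec n) ℂ)) + 1 := by
    calc sdeSqrt2Mat (chan (U : Matrix (QVec n) (QVec n) ℂ))
        = sdeSqrt2Mat (chan ((Rgate (Pauli a b))ᴴ)
            * (chan (Rgate (Pauli a b)) * chan (U : Matrix (QVec n) (QVec n) ℂ))) := by
          rw [hinv]
      _ ≤ _ + 1 := sdeMat_mul_le _ _ hRH (dring_mul_entries _ _ hRcD hMD)
  simp only [Set.mem_insert_iff, Set.mem_singleton_iff]
  omega
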